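/- arXiv:2102.02158 — 3 statements merged into one kernel-verified Lean document; each statement's English description precedes it below -/
import Mathlib

section
/- Let f be a transcendental entire function and define m̃(r) = max{ m(s,f) : 0 ≤ s ≤ r } for r ≥ 0, where m(s,f) = min_{|z|=s} |f(z)|. Then there exists r > 0 such that the iterates mⁿ(r) of the minimum modulus function tend to infinity as n → ∞ if and only if there exists R > 0 such that m̃(r) > r for all r ≥ R. -/
open Filter Metric

/-- The maximum modulus `M(r,f)` of `f` on the circle `|z| = r`. -/
noncomputable def maxMod (f : ℂ → ℂ) (r : ℝ) : ℝ :=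
  sSup ((fun z => ‖f z‖) '' sphere (0 : ℂ) r)

/-- The minimum modulus `m(r,f)` of `f` on the circle `|z| = r`. -/
noncomputable def minMod (f : ℂ → ℂ) (r : ℝ) : ℝ :=
  sInf ((fun z => ‖f z‖) '' sphere (0 : ℂ) r)

/-- `m̃(r) = max { m(s,f) : 0 ≤ s ≤ r }`. -/
noncomputable def mtil (f : ℂ → ℂ) (r : ℝ) : ℝ :=
  sSup (minMod f '' Set.Icc 0 r)

/-- `f` is a transcendental entire function. -/
def EntireTrans (f : ℂ → ℂ) : Prop :=
  Differentiable ℂ f ∧ ∀ p : Polynomial ℂ, f ≠ fun z => p.eval z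

section Basic
variable {f : ℂ → ℂ}

lemma sphere_ne (r : ℝ) (hr : 0 ≤ r) : ((fun z => ‖f z‖) '' sphere (0 : ℂ) r).Nonempty := by
  refine ⟨‖f r‖, ⟨(r : ℂ), ?_, rfl⟩⟩
  simp [mem_sphere_zero_iff_norm, Complex.norm_real, abs_of_nonneg hr]

lemma minMod_nonneg (r : ℝ) : 0 ≤ minMod f r := by
  apply Real.sInf_nonneg
  rintro x ⟨z, _, rfl⟩; exact norm_nonneg _

lemma minMod_le {r : ℝ} {z : ℂ} (hz : z ∈ sphere (0 : ℂ) r) :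
    minMod f r ≤ ‖f z‖ := by
  have hbd : BddBelow ((fun z => ‖f z‖) '' sphere (0 : ℂ) r) := by
    refine ⟨0, ?_⟩; rintro x ⟨w, _, rfl⟩; exact norm_nonneg _
  exact csInf_le hbd ⟨z, hz, rfl⟩

lemma minMod_exists (hd : Differentiable ℂ f) {r : ℝ} (hr : 0 ≤ r) :
    ∃ z ∈ sphere (0 : ℂ) r, minMod f r = ‖f z‖ := by
  have hne : (sphere (0:ℂ) r).Nonempty :=
    ⟨(r : ℂ), by simp [mem_sphere_zero_iff_norm, Complex.norm_real, abs_of_nonneg hr]⟩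
  obtain ⟨z, hz, hmin⟩ := (isCompact_sphere (0 : ℂ) r).exists_isMinOn hne
    (continuous_norm.comp hd.continuous).continuousOn
  refine ⟨z, hz, le_antisymm (minMod_le hz) ?_⟩
  apply le_csInf (sphere_ne r hr)
  rintro x ⟨w, hw, rfl⟩; exact hmin hw

lemma le_minMod {r c : ℝ} (hr : 0 ≤ r) (h : ∀ z ∈ sphere (0:ℂ) r, c ≤ ‖f z‖) :
    c ≤ minMod f r := by
  apply le_csInf (sphere_ne r hr)
  rintro x ⟨w, hw, rfl⟩; exact h w hw

/-- points on nearby spheres are close -/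
lemma sphere_approx {r r' : ℝ} (hr : 0 ≤ r) (hr' : 0 ≤ r') {z : ℂ}
    (hz : z ∈ sphere (0:ℂ) r) : ∃ z' ∈ sphere (0:ℂ) r', ‖z - z'‖ ≤ |r - r'| := by
  rw [mem_sphere_zero_iff_norm] at hz
  rcases eq_or_lt_of_le hr with h0 | h0
  · have hz0 : z = 0 := by
      rwa [← h0, norm_eq_zero] at hz
    refine ⟨(r' : ℂ), by simp [mem_sphere_zero_iff_norm, abs_of_nonneg hr'], ?_⟩
    simp [hz0, ← h0, Complex.norm_real, abs_of_nonneg hr', abs_of_nonpos (neg_nonpos.mpr hr')]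
  · refine ⟨(r' / r : ℝ) • z, ?_, ?_⟩
    · rw [mem_sphere_zero_iff_norm, norm_smul, hz, Real.norm_eq_abs,
        abs_of_nonneg (div_nonneg hr' h0.le), div_mul_cancel₀ _ h0.ne']
    · have : z - (r' / r : ℝ) • z = ((1 : ℝ) - r'/r) • z := by
        rw [sub_smul, one_smul]
      rw [this, norm_smul, hz, Real.norm_eq_abs]
      rw [show (1 : ℝ) - r'/r = (r - r')/r by field_simp]
      rw [abs_div, abs_of_pos h0, div_mul_cancel₀ _ h0.ne']

lemma minMod_cont (hd : Differentiable ℂ f) : ContinuousOn (minMod f) (Set.Ici (0:ℝ)) := by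
  intro r₀ hr₀
  rw [Metric.continuousWithinAt_iff]
  intro ε hε
  -- uniform continuity on closed ball of radius r₀ + 1
  have hK : IsCompact (closedBall (0:ℂ) (r₀ + 1)) := isCompact_closedBall _ _
  have hUC := hK.uniformContinuousOn_of_continuous hd.continuous.continuousOn
  rw [Metric.uniformContinuousOn_iff] at hUC
  obtain ⟨δ, hδ, hδ'⟩ := hUC (ε/2) (by positivity)
  refine ⟨min δ 1, by positivity, ?_⟩
  intro r hr hrr₀
  have hr0 : (0:ℝ) ≤ r := hr
  have hr₀0 : (0:ℝ) ≤ r₀ := hr₀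
  have hdist : |r - r₀| < min δ 1 := by rwa [Real.dist_eq] at hrr₀
  have key : ∀ a b : ℝ, 0 ≤ a → 0 ≤ b → a ≤ r₀ + 1 → b ≤ r₀ + 1 → |a - b| < δ →
      minMod f b ≤ minMod f a + ε/2 := by
    intro a b ha hb har hbr hab
    obtain ⟨z, hz, hzeq⟩ := minMod_exists hd ha
    obtain ⟨z', hz', hzz'⟩ := sphere_approx ha hb hz
    have hz'mem : z' ∈ closedBall (0:ℂ) (r₀ + 1) := by
      rw [mem_closedBall, dist_zero_right, mem_sphere_zero_iff_norm.mp hz']; exact hbr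
    have hzmem : z ∈ closedBall (0:ℂ) (r₀ + 1) := by
      rw [mem_closedBall, dist_zero_right, mem_sphere_zero_iff_norm.mp hz]; exact har
    have : dist (f z') (f z) < ε/2 := hδ' z' hz'mem z hzmem (by
      rw [dist_comm, dist_eq_norm]
      calc ‖z - z'‖ = ‖z - z'‖ := rfl
        _ ≤ |a - b| := hzz'
        _ < δ := hab)
    calc minMod f b ≤ ‖f z'‖ := minMod_le hz'
      _ ≤ ‖f z‖ + ε/2 := by
          have h1 : |(‖f z'‖ : ℝ) - ‖f z‖| ≤ dist (f z') (f z) := by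
            rw [dist_eq_norm]
            exact abs_norm_sub_norm_le _ _
          nlinarith [abs_le.mp h1]
      _ = minMod f a + ε/2 := by rw [hzeq]
  have hrle : r ≤ r₀ + 1 := by
    have := hdist.trans_le (min_le_right _ _)
    rw [abs_lt] at this; linarith
  have h1 : minMod f r ≤ minMod f r₀ + ε/2 :=
    key r₀ r hr₀0 hr0 (by linarith) hrle (by
      rw [abs_sub_comm]; exact hdist.trans_le (min_le_left _ _))
  have h2 : minMod f r₀ ≤ minMod f r + ε/2 :=
    key r r₀ hr0 hr₀0 hrle (by linarith) (hdist.trans_le (min_le_left _ _))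
  rw [Real.dist_eq, abs_lt]
  constructor <;> linarith

end Basic
section Mtil
variable {f : ℂ → ℂ}

lemma mtil_bdd (hd : Differentiable ℂ f) {b : ℝ} (hb : 0 ≤ b) :
    BddAbove (minMod f '' Set.Icc 0 b) := by
  obtain ⟨C, hC⟩ := (isCompact_Icc (a := (0:ℝ)) (b := b)).exists_bound_of_continuousOn
    ((hd.continuous.comp Complex.continuous_ofReal).norm.continuousOn)
  refine ⟨C, ?_⟩
  rintro x ⟨s, hs, rfl⟩
  calc minMod f s ≤ ‖f s‖ := minMod_le (by
        simp [mem_sphere_zero_iff_norm, Complex.norm_real, abs_of_nonneg hs.1])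
    _ ≤ C := by simpa using hC s hs

lemma mtil_ne {b : ℝ} (hb : 0 ≤ b) : (minMod f '' Set.Icc 0 b).Nonempty :=
  ⟨minMod f 0, ⟨0, ⟨le_refl _, hb⟩, rfl⟩⟩

lemma minMod_le_mtil (hd : Differentiable ℂ f) {s b : ℝ} (hs : 0 ≤ s) (hsb : s ≤ b) :
    minMod f s ≤ mtil f b :=
  le_csSup (mtil_bdd hd (hs.trans hsb)) ⟨s, ⟨hs, hsb⟩, rfl⟩

lemma mtil_exists (hd : Differentiable ℂ f) {b : ℝ} (hb : 0 ≤ b) :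
    ∃ p ∈ Set.Icc (0:ℝ) b, minMod f p = mtil f b := by
  have hcpt : IsCompact (minMod f '' Set.Icc 0 b) :=
    (isCompact_Icc).image_of_continuousOn ((minMod_cont hd).mono (by
      intro x hx; exact hx.1))
  have := hcpt.sSup_mem (mtil_ne hb)
  obtain ⟨p, hp, hpe⟩ := this
  exact ⟨p, hp, hpe⟩

lemma mtil_mono (hd : Differentiable ℂ f) {a b : ℝ} (ha : 0 ≤ a) (hab : a ≤ b) :
    mtil f a ≤ mtil f b := by
  apply csSup_le (mtil_ne ha)
  rintro x ⟨s, hs, rfl⟩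
  exact minMod_le_mtil hd hs.1 (hs.2.trans hab)

lemma lt_mtil (hd : Differentiable ℂ f) {b c : ℝ} (hb : 0 ≤ b) (h : c < mtil f b) :
    ∃ s ∈ Set.Icc (0:ℝ) b, c < minMod f s := by
  obtain ⟨p, hp, hpe⟩ := mtil_exists hd hb
  exact ⟨p, hp, by rw [hpe]; exact h⟩

lemma minMod_zero_of_zero {z : ℂ} (hz : f z = 0) : minMod f (‖z‖) = 0 := by
  refine le_antisymm ?_ (minMod_nonneg _)
  have : minMod f (‖z‖) ≤ ‖f z‖ := minMod_le (by
    simp [mem_sphere_zero_iff_norm])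
  simpa [hz] using this

end Mtil

section MinPrinciple
variable {f : ℂ → ℂ}

/-- Minimum modulus principle on a zero-free closed annulus. -/
lemma min_principle (hd : Differentiable ℂ f) {a b t : ℝ} (ha : 0 ≤ a)
    (hat : a ≤ t) (htb : t ≤ b)
    (hz : ∀ z : ℂ, a ≤ ‖z‖ → ‖z‖ ≤ b → f z ≠ 0) :
    min (minMod f a) (minMod f b) ≤ minMod f t := by
  rcases eq_or_lt_of_le hat with rfl | hat
  · exact min_le_left _ _
  rcases eq_or_lt_of_le htb with rfl | htb
  · exact min_le_right _ _
  -- open annulus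
  set U : Set ℂ := {z | a < ‖z‖ ∧ ‖z‖ < b} with hU
  have hUopen : IsOpen U := by
    apply IsOpen.inter
    · exact isOpen_lt continuous_const continuous_norm
    · exact isOpen_lt continuous_norm continuous_const
  have hUb : Bornology.IsBounded U := by
    apply (Metric.isBounded_iff_subset_closedBall 0).mpr
    exact ⟨b, fun z hz' => by
      rw [mem_closedBall, dist_zero_right]; exact le_of_lt hz'.2⟩
  have hUne : U.Nonempty := ⟨(t : ℂ), by
    constructor <;> simp [Complex.norm_real, abs_of_nonneg (ha.trans hat.le)] <;> assumption⟩
  have hclU : closure U ⊆ {z : ℂ | a ≤ ‖z‖ ∧ ‖z‖ ≤ b} := by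
    apply closure_minimal
    · intro z hz'; exact ⟨hz'.1.le, hz'.2.le⟩
    · exact IsClosed.inter (isClosed_le continuous_const continuous_norm)
        (isClosed_le continuous_norm continuous_const)
  -- g = 1/f differentiable on closure U
  have hg : DiffContOnCl ℂ (fun z => (f z)⁻¹) U := by
    have : DifferentiableOn ℂ (fun z => (f z)⁻¹) (closure U) := by
      intro z hzc
      have hz0 : f z ≠ 0 := hz z (hclU hzc).1 (hclU hzc).2
      exact ((hd z).differentiableWithinAt).inv hz0
    exact ⟨this.mono subset_closure, this.continuousOn⟩
  obtain ⟨w, hwf, hwmax⟩ := Complex.exists_mem_frontier_isMaxOn_norm hUb hUne hg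
  have hwcl : w ∈ closure U := by
    have := frontier_subset_closure (s := U); exact this hwf
  have hwnotU : w ∉ U := by
    rw [frontier, hUopen.interior_eq] at hwf; exact hwf.2
  have hwa : ‖w‖ = a ∨ ‖w‖ = b := by
    have h1 := (hclU hwcl).1
    have h2 := (hclU hwcl).2
    by_contra hcon
    push_neg at hcon
    exact hwnotU ⟨lt_of_le_of_ne h1 (Ne.symm hcon.1), lt_of_le_of_ne h2 hcon.2⟩
  have hfw : min (minMod f a) (minMod f b) ≤ ‖f w‖ := by
    rcases hwa with h | h
    · refine (min_le_left _ _).trans ?_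
      exact h ▸ minMod_le (by simp [mem_sphere_zero_iff_norm])
    · refine (min_le_right _ _).trans ?_
      exact h ▸ minMod_le (by simp [mem_sphere_zero_iff_norm])
  apply le_minMod (ha.trans hat.le)
  intro z hzs
  rw [mem_sphere_zero_iff_norm] at hzs
  have hzU : z ∈ U := ⟨by rw [hzs]; exact hat, by
    rw [hzs]; exact htb⟩
  have hzcl : z ∈ closure U := subset_closure hzU
  have := hwmax hzcl
  simp only [Function.comp_apply, norm_inv] at this
  -- this : (‖f z‖)⁻¹ ≤ (‖f w‖)⁻¹
  have hfz0 : f z ≠ 0 := hz z (le_of_lt hzU.1) (le_of_lt hzU.2)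
  have hfw0 : f w ≠ 0 := hz w (hclU hwcl).1 (hclU hwcl).2
  have habz : 0 < ‖f z‖ := by
    rwa [norm_pos_iff]
  have habw : 0 < ‖f w‖ := by
    rwa [norm_pos_iff]
  have hinv : (‖f z‖)⁻¹ ≤ (‖f w‖)⁻¹ := this
  have : ‖f w‖ ≤ ‖f z‖ := by
    rwa [inv_le_inv₀ (by positivity) habw] at hinv
  exact hfw.trans this

end MinPrinciple
section Pullback

/-- image of an interval with endpoints mapped to `{c,d}` and no interior preimages of `c,d`. -/
lemma image_eq_Icc {g : ℝ → ℝ} {α β c d : ℝ} (hαβ : α ≤ β) (hcd : c < d)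
    (hg : ContinuousOn g (Set.Icc α β))
    (hends : (g α = c ∧ g β = d) ∨ (g α = d ∧ g β = c))
    (hint : ∀ x ∈ Set.Ioo α β, g x ≠ c ∧ g x ≠ d) :
    g '' Set.Icc α β = Set.Icc c d := by
  apply Set.eq_of_subset_of_subset
  · rintro _ ⟨x, hx, rfl⟩
    by_contra hxmem
    rw [Set.mem_Icc] at hxmem
    push_neg at hxmem
    rcases hends with ⟨hα, hβ⟩ | ⟨hα, hβ⟩
    · have hxa : x ≠ α := fun h => by
        rcases lt_or_ge (g x) c with h1 | h1
        · rw [h, hα] at h1; exact absurd h1 (lt_irrefl _)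
        · have := hxmem h1; rw [h, hα] at this; exact absurd (hcd.trans this) (lt_irrefl _)
      have hxb : x ≠ β := fun h => by
        rcases lt_or_ge (g x) c with h1 | h1
        · rw [h, hβ] at h1; exact absurd (h1.trans hcd) (lt_irrefl _)
        · have := hxmem h1; rw [h, hβ] at this; exact absurd this (lt_irrefl _)
      rcases lt_or_ge (g x) c with h1 | h1
      · -- g x < c ≤ d = g β, find y ∈ [x, β] with g y = c
        have hsub : Set.Icc (g x) (g β) ⊆ g '' Set.Icc x β :=
          intermediate_value_Icc (lt_of_le_of_ne hx.2 hxb).le (hg.mono (Set.Icc_subset_Icc hx.1 le_rfl))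
        obtain ⟨y, hy, hyc⟩ := hsub ⟨h1.le, by rw [hβ]; exact hcd.le⟩
        have hy1 : α < y := lt_of_lt_of_le (lt_of_le_of_ne hx.1 (Ne.symm hxa)) hy.1
        have hy2 : y < β := lt_of_le_of_ne hy.2 (fun h => by rw [h, hβ] at hyc; exact absurd hyc (ne_of_gt hcd))
        exact (hint y ⟨hy1, hy2⟩).1 hyc
      · have h2 := hxmem h1  -- d < g x
        -- g α = c ≤ d < g x, find y ∈ [α, x] with g y = d
        have hsub : Set.Icc (g α) (g x) ⊆ g '' Set.Icc α x :=
          intermediate_value_Icc (lt_of_le_of_ne hx.1 (Ne.symm hxa)).le (hg.mono (Set.Icc_subset_Icc le_rfl hx.2))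
        obtain ⟨y, hy, hyd⟩ := hsub ⟨by rw [hα]; exact hcd.le, h2.le⟩
        have hy1 : α < y := lt_of_le_of_ne hy.1 (fun h => by rw [← h, hα] at hyd; exact absurd hyd (ne_of_lt hcd))
        have hy2 : y < β := lt_of_le_of_lt hy.2 (lt_of_le_of_ne hx.2 hxb)
        exact (hint y ⟨hy1, hy2⟩).2 hyd
    · have hxa : x ≠ α := fun h => by
        rcases lt_or_ge (g x) c with h1 | h1
        · rw [h, hα] at h1; exact absurd (h1.trans hcd) (lt_irrefl _)
        · have := hxmem h1; rw [h, hα] at this; exact absurd this (lt_irrefl _)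
      have hxb : x ≠ β := fun h => by
        rcases lt_or_ge (g x) c with h1 | h1
        · rw [h, hβ] at h1; exact absurd h1 (lt_irrefl _)
        · have := hxmem h1; rw [h, hβ] at this; exact absurd (hcd.trans this) (lt_irrefl _)
      rcases lt_or_ge (g x) c with h1 | h1
      · -- g α = d ≥ c > g x : find y ∈ [α, x] with g y = c
        have hsub : Set.Icc (g x) (g α) ⊆ g '' Set.Icc α x :=
          intermediate_value_Icc' (lt_of_le_of_ne hx.1 (Ne.symm hxa)).le (hg.mono (Set.Icc_subset_Icc le_rfl hx.2))
        obtain ⟨y, hy, hyc⟩ := hsub ⟨h1.le, by rw [hα]; exact hcd.le⟩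
        have hy1 : α < y := lt_of_le_of_ne hy.1 (fun h => by rw [← h, hα] at hyc; exact absurd hyc (ne_of_gt hcd))
        have hy2 : y < β := lt_of_le_of_lt hy.2 (lt_of_le_of_ne hx.2 hxb)
        exact (hint y ⟨hy1, hy2⟩).1 hyc
      · have h2 := hxmem h1
        -- g β = c ≤ d < g x : find y ∈ [x, β] with g y = d
        have hsub : Set.Icc (g β) (g x) ⊆ g '' Set.Icc x β :=
          intermediate_value_Icc' (lt_of_le_of_ne hx.2 hxb).le (hg.mono (Set.Icc_subset_Icc hx.1 le_rfl))
        obtain ⟨y, hy, hyd⟩ := hsub ⟨by rw [hβ]; exact hcd.le, h2.le⟩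
        have hy1 : α < y := lt_of_lt_of_le (lt_of_le_of_ne hx.1 (Ne.symm hxa)) hy.1
        have hy2 : y < β := lt_of_le_of_ne hy.2 (fun h => by rw [h, hβ] at hyd; exact absurd hyd (ne_of_lt hcd))
        exact (hint y ⟨hy1, hy2⟩).2 hyd
  · rcases hends with ⟨hα, hβ⟩ | ⟨hα, hβ⟩
    · have := intermediate_value_Icc hαβ hg
      rw [hα, hβ] at this; exact this
    · have := intermediate_value_Icc' hαβ hg
      rw [hα, hβ] at this; exact this

/-- no-interior-hit interval selection, increasing case -/
lemma select_interval {g : ℝ → ℝ} {u v c d : ℝ} (huv : u ≤ v) (hcd : c ≠ d)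
    (hg : ContinuousOn g (Set.Icc u v)) (hu : g u = c) (hv : g v = d) :
    ∃ α β, u ≤ α ∧ α ≤ β ∧ β ≤ v ∧ g α = c ∧ g β = d ∧
      ∀ x ∈ Set.Ioo α β, g x ≠ c ∧ g x ≠ d := by
  set S := {x ∈ Set.Icc u v | g x = c} with hS
  have hSclosed : IsClosed S := hg.preimage_isClosed_of_isClosed isClosed_Icc isClosed_singleton
  have hSne : S.Nonempty := ⟨u, ⟨le_rfl, huv⟩, hu⟩
  have hSbdd : BddAbove S := ⟨v, fun x hx => hx.1.2⟩
  have hαS : sSup S ∈ S := hSclosed.csSup_mem hSne hSbdd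
  set α := sSup S with hαdef
  have hαu : u ≤ α := hαS.1.1
  have hαv : α ≤ v := hαS.1.2
  have hgα : g α = c := hαS.2
  set T := {x ∈ Set.Icc α v | g x = d} with hT
  have hTclosed : IsClosed T :=
    (hg.mono (Set.Icc_subset_Icc hαu le_rfl)).preimage_isClosed_of_isClosed isClosed_Icc isClosed_singleton
  have hTne : T.Nonempty := ⟨v, ⟨hαv, le_rfl⟩, hv⟩
  have hTbdd : BddBelow T := ⟨α, fun x hx => hx.1.1⟩
  have hβT : sInf T ∈ T := hTclosed.csInf_mem hTne hTbdd
  set β := sInf T with hβdef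
  refine ⟨α, β, hαu, hβT.1.1, hβT.1.2, hgα, hβT.2, ?_⟩
  intro x hx
  constructor
  · intro hgx
    have hxS : x ∈ S := ⟨⟨hαu.trans hx.1.le, hx.2.le.trans hβT.1.2⟩, hgx⟩
    exact absurd (le_csSup hSbdd hxS) (not_le.mpr hx.1)
  · intro hgx
    have hxT : x ∈ T := ⟨⟨hx.1.le, hx.2.le.trans hβT.1.2⟩, hgx⟩
    exact absurd (csInf_le hTbdd hxT) (not_le.mpr hx.2)

/-- Pullback lemma: for any closed subinterval of the image, there is a subinterval
mapping exactly onto it. -/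
lemma pullback {g : ℝ → ℝ} {a b c d : ℝ} (hab : a ≤ b) (hcd : c ≤ d)
    (hg : ContinuousOn g (Set.Icc a b)) (hsub : Set.Icc c d ⊆ g '' Set.Icc a b) :
    ∃ a' b', a ≤ a' ∧ a' ≤ b' ∧ b' ≤ b ∧ g '' Set.Icc a' b' = Set.Icc c d := by
  rcases eq_or_lt_of_le hcd with rfl | hcd'
  · obtain ⟨u, hu, hgu⟩ := hsub (Set.mem_Icc.mpr ⟨le_rfl, le_rfl⟩)
    exact ⟨u, u, hu.1, le_rfl, hu.2, by rw [Set.Icc_self, Set.image_singleton, hgu, Set.Icc_self]⟩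
  obtain ⟨u, hu, hgu⟩ := hsub (Set.mem_Icc.mpr ⟨le_rfl, hcd⟩)
  obtain ⟨v, hv, hgv⟩ := hsub (Set.mem_Icc.mpr ⟨hcd, le_rfl⟩)
  rcases le_total u v with huv | hvu
  · obtain ⟨α, β, h1, h2, h3, h4, h5, h6⟩ :=
      select_interval huv (ne_of_lt hcd') (hg.mono (Set.Icc_subset_Icc hu.1 hv.2)) hgu hgv
    refine ⟨α, β, hu.1.trans h1, h2, h3.trans hv.2, ?_⟩
    exact image_eq_Icc h2 hcd' (hg.mono (Set.Icc_subset_Icc (hu.1.trans h1) (h3.trans hv.2)))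
      (Or.inl ⟨h4, h5⟩) h6
  · obtain ⟨α, β, h1, h2, h3, h4, h5, h6⟩ :=
      select_interval hvu (Ne.symm (ne_of_lt hcd')) (hg.mono (Set.Icc_subset_Icc hv.1 hu.2)) hgv hgu
    refine ⟨α, β, hv.1.trans h1, h2, h3.trans hu.2, ?_⟩
    refine image_eq_Icc h2 hcd' (hg.mono (Set.Icc_subset_Icc (hv.1.trans h1) (h3.trans hu.2)))
      (Or.inr ⟨h4, h5⟩) ?_
    intro x hx
    exact ⟨(h6 x hx).2, (h6 x hx).1⟩

end Pullback
section Itinerary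

private def ItinInv (g : ℝ → ℝ) (a b : ℕ → ℝ) (n : ℕ) (p : ℝ × ℝ) : Prop :=
  p.1 ≤ p.2 ∧ ContinuousOn (g^[n]) (Set.Icc p.1 p.2) ∧
    g^[n] '' Set.Icc p.1 p.2 = Set.Icc (a n) (b n)

lemma itinerary {g : ℝ → ℝ} (hg : ContinuousOn g (Set.Ici 0))
    (a b : ℕ → ℝ) (ha0 : ∀ n, 0 ≤ a n) (hab : ∀ n, a n ≤ b n)
    (hcov : ∀ n, Set.Icc (a (n+1)) (b (n+1)) ⊆ g '' Set.Icc (a n) (b n)) :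
    ∃ x ∈ Set.Icc (a 0) (b 0), ∀ n, g^[n] x ∈ Set.Icc (a n) (b n) := by
  have step : ∀ n (x : {p : ℝ × ℝ // ItinInv g a b n p}),
      {y : {p : ℝ × ℝ // ItinInv g a b (n+1) p} //
        Set.Icc y.1.1 y.1.2 ⊆ Set.Icc x.1.1 x.1.2} := by
    intro n x
    obtain ⟨⟨α, β⟩, h1, h2, h3⟩ := x
    have hiter : g^[n+1] = g ∘ g^[n] := Function.iterate_succ' g n
    have hmaps : Set.MapsTo (g^[n]) (Set.Icc α β) (Set.Ici 0) := by
      intro y hy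
      have : g^[n] y ∈ Set.Icc (a n) (b n) := h3 ▸ Set.mem_image_of_mem _ hy
      exact (ha0 n).trans this.1
    have hcont : ContinuousOn (g^[n+1]) (Set.Icc α β) := by
      rw [hiter]; exact hg.comp h2 hmaps
    have himg : g^[n+1] '' Set.Icc α β = g '' Set.Icc (a n) (b n) := by
      rw [hiter, Set.image_comp, h3]
    have hsub : Set.Icc (a (n+1)) (b (n+1)) ⊆ g^[n+1] '' Set.Icc α β := by
      rw [himg]; exact hcov n
    have := pullback h1 (hab (n+1)) hcont hsub
    choose α' β' hαα' hα'β' hβ'β himg' using this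
    exact ⟨⟨⟨α', β'⟩, hα'β', hcont.mono (Set.Icc_subset_Icc hαα' hβ'β), himg'⟩,
      Set.Icc_subset_Icc hαα' hβ'β⟩
  have base : {p : ℝ × ℝ // ItinInv g a b 0 p} :=
    ⟨⟨a 0, b 0⟩, hab 0, by simpa using continuousOn_id, by simp⟩
  let seq : ∀ n, {p : ℝ × ℝ // ItinInv g a b n p} :=
    fun n => Nat.rec base (fun n ih => (step n ih).1) n
  set α : ℕ → ℝ := fun n => (seq n).1.1 with hα
  set β : ℕ → ℝ := fun n => (seq n).1.2 with hβ
  have hnest : ∀ n, Set.Icc (α (n+1)) (β (n+1)) ⊆ Set.Icc (α n) (β n) :=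
    fun n => (step n (seq n)).2
  have hαβ : ∀ n, α n ≤ β n := fun n => (seq n).2.1
  have hchain : ∀ m n, m ≤ n → Set.Icc (α n) (β n) ⊆ Set.Icc (α m) (β m) := by
    intro m n hmn
    induction n with
    | zero => rw [Nat.le_zero.mp hmn]
    | succ k ih =>
      rcases Nat.lt_or_ge m (k+1) with h | h
      · exact (hnest k).trans (ih (Nat.lt_succ_iff.mp h))
      · rw [Nat.le_antisymm hmn h]
  have hbdd : BddAbove (Set.range α) := by
    refine ⟨β 0, ?_⟩
    rintro _ ⟨n, rfl⟩
    exact ((hchain 0 n (Nat.zero_le n)) ⟨le_rfl, hαβ n⟩).2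
  set x := sSup (Set.range α) with hx
  have hxmem : ∀ n, x ∈ Set.Icc (α n) (β n) := by
    intro n
    constructor
    · exact le_csSup hbdd ⟨n, rfl⟩
    · have hne : (Set.range α).Nonempty := ⟨α 0, ⟨0, rfl⟩⟩
      apply csSup_le hne
      rintro _ ⟨m, rfl⟩
      rcases le_total m n with h | h
      · exact (((hchain m n h) ⟨le_rfl, hαβ n⟩).1).trans (hαβ n)
      · exact ((hchain n m h) ⟨le_rfl, hαβ m⟩).2
  have hfinal : ∀ n, g^[n] x ∈ Set.Icc (a n) (b n) := by
    intro n
    have := (seq n).2.2.2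
    rw [← this]
    exact Set.mem_image_of_mem _ (hxmem n)
  refine ⟨x, ?_, hfinal⟩
  simpa using hfinal 0

end Itinerary
open Topology

section QP
variable {f : ℂ → ℂ}

lemma exists_qp (hd : Differentiable ℂ f) {R : ℝ} (hR : 0 < R)
    (hc : ∀ r ≥ R, mtil f r > r) {T : ℝ} (hT : R ≤ T) :
    ∃ q p : ℕ → ℝ, (∀ n, T < q n) ∧ StrictMono q ∧ Tendsto q atTop atTop ∧
      (∀ n, p n ∈ Set.Icc (0:ℝ) (q n)) ∧ (∀ n, minMod f (p n) = q (n+1)) ∧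
      (∀ n, q (n+1) = mtil f (q n)) := by
  set q : ℕ → ℝ := fun n => Nat.rec (mtil f T) (fun _ ih => mtil f ih) n with hqdef
  have hq0 : q 0 = mtil f T := rfl
  have hqs : ∀ n, q (n+1) = mtil f (q n) := fun n => rfl
  have hqT : ∀ n, T < q n := by
    intro n
    induction n with
    | zero => exact hc T hT
    | succ k ih =>
      rw [hqs]
      exact ih.trans (hc (q k) ((hT.trans ih.le)))
  have hqmono : StrictMono q := by
    apply strictMono_nat_of_lt_succ
    intro n
    rw [hqs]
    exact hc (q n) (hT.trans (hqT n).le)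
  have hq0le : ∀ n, (0:ℝ) ≤ q n := fun n => ((hR.trans_le hT).trans (hqT n)).le
  have hqtop : Tendsto q atTop atTop := by
    apply tendsto_atTop_atTop_of_monotone' hqmono.monotone
    intro hbdd
    set ℓ := ⨆ n, q n with hℓ
    have hql : ∀ n, q n ≤ ℓ := fun n => le_ciSup hbdd n
    have hℓR : R ≤ ℓ := (hT.trans (hqT 0).le).trans (hql 0)
    have hℓ0 : (0:ℝ) ≤ ℓ := (hR.le.trans hℓR)
    have hmt := hc ℓ hℓR
    obtain ⟨s, hs, hsl⟩ := lt_mtil hd hℓ0 hmt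
    rcases eq_or_lt_of_le hs.2 with heq | hslt
    · -- s = ℓ : use continuity
      rw [heq] at hsl
      have htend : Tendsto q atTop (𝓝 ℓ) := tendsto_atTop_ciSup hqmono.monotone hbdd
      have htendw : Tendsto q atTop (nhdsWithin ℓ (Set.Ici 0)) :=
        tendsto_nhdsWithin_of_tendsto_nhds_of_eventually_within q htend
          (Filter.Eventually.of_forall (fun n => hq0le n))
      have hcw : Tendsto (minMod f ∘ q) atTop (𝓝 (minMod f ℓ)) :=
        (minMod_cont hd ℓ hℓ0).tendsto.comp htendw
      have hev := hcw.eventually (eventually_gt_nhds hsl)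
      obtain ⟨n, hn⟩ := hev.exists
      have : minMod f (q n) ≤ q (n+1) := by
        rw [hqs]; exact minMod_le_mtil hd (hq0le n) le_rfl
      exact absurd ((hn.trans_le this).trans_le (hql (n+1))) (lt_irrefl _)
    · -- s < ℓ : some q n exceeds s
      have : ∃ n, s < q n := by
        by_contra hcon
        push_neg at hcon
        have : ℓ ≤ s := ciSup_le hcon
        exact absurd (hslt.trans_le this) (lt_irrefl _)
      obtain ⟨n, hn⟩ := this
      have : minMod f s ≤ q (n+1) := by
        rw [hqs]; exact minMod_le_mtil hd hs.1 hn.le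
      exact absurd ((hsl.trans_le this).trans_le (hql (n+1))) (lt_irrefl _)
  have hpex : ∀ n, ∃ p ∈ Set.Icc (0:ℝ) (q n), minMod f p = q (n+1) := by
    intro n
    obtain ⟨p, hp, hpe⟩ := mtil_exists hd (hq0le n)
    exact ⟨p, hp, by rw [hpe, hqs]⟩
  choose p hp1 hp2 using hpex
  exact ⟨q, p, hqT, hqmono, hqtop, hp1, hp2, hqs⟩

/-- if `q (n+1) > mtil f C` then `C < p n`. -/
lemma p_large {q p : ℕ → ℝ} (hd : Differentiable ℂ f)
    (hp1 : ∀ n, p n ∈ Set.Icc (0:ℝ) (q n)) (hp2 : ∀ n, minMod f (p n) = q (n+1))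
    {C : ℝ} (hC : 0 ≤ C) {n : ℕ} (h : mtil f C < q (n+1)) : C < p n := by
  by_contra hcon
  push_neg at hcon
  have := minMod_le_mtil hd (hp1 n).1 hcon
  rw [hp2 n] at this
  exact absurd (h.trans_le this) (lt_irrefl _)

end QP
section Hard
variable {f : ℂ → ℂ}

lemma caseA (hd : Differentiable ℂ f) {R : ℝ} (hR : 0 < R)
    (hc : ∀ r ≥ R, mtil f r > r)
    (hzero : ∀ C : ℝ, ∃ z : ℂ, f z = 0 ∧ C < ‖z‖) :
    ∃ r > (0:ℝ), Tendsto (fun n => (minMod f)^[n] r) atTop atTop := by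
  obtain ⟨z₀, hz₀, hz₀1⟩ := hzero 1
  have hz₀0 : (0:ℝ) ≤ ‖z₀‖ := norm_nonneg _
  set T := max R (mtil f (‖z₀‖)) with hT
  obtain ⟨q, p, hqT, hqmono, hqtop, hp1, hp2, hqs⟩ :=
    exists_qp hd hR hc (le_max_left _ _)
  -- p n > |z₀|
  have hpz₀ : ∀ n, ‖z₀‖ < p n := by
    intro n
    apply p_large hd hp1 hp2 hz₀0
    exact (le_max_right R _).trans_lt (hqT (n+1))
  -- the zero sets
  set K : ℕ → Set ℝ := fun n => (fun z : ℂ => ‖z‖) '' (f ⁻¹' {0} ∩ closedBall 0 (p n)) with hK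
  have hKcpt : ∀ n, IsCompact (K n) := by
    intro n
    apply IsCompact.image
    · exact (isCompact_closedBall _ _).inter_left
        (isClosed_singleton.preimage hd.continuous)
    · exact continuous_norm
  have hKne : ∀ n, (K n).Nonempty := by
    intro n
    refine ⟨‖z₀‖, z₀, ⟨hz₀, ?_⟩, rfl⟩
    rw [mem_closedBall, dist_zero_right]
    exact (hpz₀ n).le
  set w : ℕ → ℝ := fun n => sSup (K n) with hw
  have hwmem : ∀ n, w n ∈ K n := fun n => (hKcpt n).sSup_mem (hKne n)
  have hwz : ∀ n, minMod f (w n) = 0 := by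
    intro n
    obtain ⟨ζ, ⟨hζ, _⟩, hζe⟩ := hwmem n
    rw [← hζe]
    exact minMod_zero_of_zero hζ
  have hwle : ∀ n, w n ≤ p n := by
    intro n
    apply csSup_le (hKne n)
    rintro _ ⟨ζ, ⟨_, hζb⟩, rfl⟩
    rwa [mem_closedBall, dist_zero_right] at hζb
  have hwge : ∀ n, ‖z₀‖ ≤ w n := by
    intro n
    apply le_csSup (hKcpt n).bddAbove
    refine ⟨z₀, ⟨hz₀, ?_⟩, rfl⟩
    rw [mem_closedBall, dist_zero_right]
    exact (hpz₀ n).le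
  have hw0 : ∀ n, (0:ℝ) ≤ w n := fun n => hz₀0.trans (hwge n)
  -- covering
  have hcov : ∀ n, Set.Icc (w (n+1)) (p (n+1)) ⊆ minMod f '' Set.Icc (w n) (p n) := by
    intro n
    have hsub : Set.Icc (minMod f (w n)) (minMod f (p n)) ⊆ minMod f '' Set.Icc (w n) (p n) :=
      intermediate_value_Icc (hwle n) ((minMod_cont hd).mono (fun x hx => (hw0 n).trans hx.1))
    intro t ht
    apply hsub
    rw [hwz n, hp2 n]
    exact ⟨(hw0 (n+1)).trans ht.1, ht.2.trans (hp1 (n+1)).2⟩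
  obtain ⟨x, hx0, hxit⟩ := itinerary ((minMod_cont hd)) w p hw0 hwle hcov
  refine ⟨x, ?_, ?_⟩
  · exact lt_trans one_pos (hz₀1.trans_le ((hwge 0).trans hx0.1))
  · rw [Filter.tendsto_atTop]
    intro C
    obtain ⟨z₁, hz₁, hz₁C⟩ := hzero (max C 0)
    have hz₁0 : (0:ℝ) ≤ ‖z₁‖ := norm_nonneg _
    have hev : ∀ᶠ n in atTop, mtil f (‖z₁‖) < q n :=
      hqtop.eventually_gt_atTop _
    obtain ⟨N, hN⟩ := eventually_atTop.mp hev
    rw [eventually_atTop]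
    refine ⟨N, fun n hn => ?_⟩
    have hpz₁ : ‖z₁‖ < p n :=
      p_large hd hp1 hp2 hz₁0 (hN (n+1) (hn.trans (Nat.le_succ n)))
    have hwz₁ : ‖z₁‖ ≤ w n := by
      apply le_csSup (hKcpt n).bddAbove
      refine ⟨z₁, ⟨hz₁, ?_⟩, rfl⟩
      rw [mem_closedBall, dist_zero_right]
      exact hpz₁.le
    calc C ≤ max C 0 := le_max_left _ _
      _ ≤ ‖z₁‖ := hz₁C.le
      _ ≤ w n := hwz₁
      _ ≤ (minMod f)^[n] x := (hxit n).1

end Hard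
section HardB
variable {f : ℂ → ℂ}

lemma caseB (hd : Differentiable ℂ f) {R : ℝ} (hR : 0 < R)
    (hc : ∀ r ≥ R, mtil f r > r)
    {W : ℝ} (hW0 : 0 ≤ W) (hW : ∀ z : ℂ, f z = 0 → ‖z‖ ≤ W) :
    ∃ r > (0:ℝ), Tendsto (fun n => (minMod f)^[n] r) atTop atTop := by
  set T := max R (mtil f W) with hT
  obtain ⟨q, p, hqT, hqmono, hqtop, hp1, hp2, hqs⟩ :=
    exists_qp hd hR hc (le_max_left _ _)
  have hpW : ∀ n, W < p n := by
    intro n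
    apply p_large hd hp1 hp2 hW0
    exact (le_max_right R _).trans_lt (hqT (n+1))
  -- key : minMod f t > t for all t ≥ p 0
  have key : ∀ t, p 0 ≤ t → t < minMod f t := by
    intro t ht
    have ht0 : (0:ℝ) ≤ t := ((hW0.trans_lt (hpW 0)).trans_le ht).le
    -- find j with p j ≤ t < q (j+1)
    have hSne : ∃ n, t < q (n+1) := by
      obtain ⟨n, hn⟩ := (hqtop.eventually_gt_atTop t).exists
      exact ⟨n, hn.trans_le (hqmono.monotone (Nat.le_succ n))⟩
    set j := Nat.find hSne with hjdef
    have hj : t < q (j+1) := Nat.find_spec hSne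
    have hpj : p j ≤ t := by
      rcases Nat.eq_zero_or_pos j with h0 | hpos
      · rw [h0]; exact ht
      · have hmin := Nat.find_min hSne (Nat.sub_lt hpos one_pos)
        push_neg at hmin
        have hje : Nat.find hSne - 1 + 1 = j := by
          rw [← hjdef]; omega
        rw [hje] at hmin
        exact (hp1 j).2.trans hmin
    -- find N with t < p N
    obtain ⟨N, hN⟩ := (hqtop.eventually_gt_atTop (max (mtil f t) t)).exists
    have hqN : max (mtil f t) t < q (N+1) := hN.trans_le (hqmono.monotone (Nat.le_succ N))
    have hptN : t < p N := p_large hd hp1 hp2 ht0 ((le_max_left _ _).trans_lt hqN)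
    -- zero-free annulus
    have hzf : ∀ z : ℂ, p j ≤ ‖z‖ → ‖z‖ ≤ p N → f z ≠ 0 := by
      intro z h1 _ hfz
      exact absurd ((hW z hfz).trans_lt (hpW j)) (not_lt.mpr h1)
    have hmp := min_principle hd (hW0.trans (hpW j).le) hpj (hptN.le)
      (fun z h1 h2 => hzf z h1 h2)
    have h1 : t < minMod f (p j) := by rw [hp2 j]; exact hj
    have h2 : t < minMod f (p N) := by
      rw [hp2 N]; exact (le_max_right _ _).trans_lt hqN
    calc t < min (minMod f (p j)) (minMod f (p N)) := lt_min h1 h2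
      _ ≤ minMod f t := hmp
  -- escaping orbit starting at p 0
  have hp00 : 0 < p 0 := hW0.trans_lt (hpW 0)
  set u : ℕ → ℝ := fun n => (minMod f)^[n] (p 0) with hu
  have husucc : ∀ n, u (n+1) = minMod f (u n) := by
    intro n
    simp only [hu, Function.iterate_succ_apply']
  have hu0 : ∀ n, p 0 ≤ u n := by
    intro n
    induction n with
    | zero => exact le_rfl
    | succ k ih =>
      rw [husucc]
      exact ih.trans (key (u k) ih).le
  have humono : StrictMono u := by
    apply strictMono_nat_of_lt_succ
    intro n
    rw [husucc]
    exact key (u n) (hu0 n)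
  refine ⟨p 0, hp00, ?_⟩
  apply tendsto_atTop_atTop_of_monotone' humono.monotone
  intro hbdd
  set ℓ := ⨆ n, u n with hℓ
  have hul : ∀ n, u n ≤ ℓ := fun n => le_ciSup hbdd n
  have hℓp : p 0 ≤ ℓ := (hu0 0).trans (hul 0)
  have hkey := key ℓ hℓp
  have htend : Tendsto u atTop (𝓝 ℓ) := tendsto_atTop_ciSup humono.monotone hbdd
  have htendw : Tendsto u atTop (nhdsWithin ℓ (Set.Ici 0)) :=
    tendsto_nhdsWithin_of_tendsto_nhds_of_eventually_within u htend
      (Filter.Eventually.of_forall (fun n => (hp00.le.trans (hu0 n))))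
  have hcw : Tendsto (minMod f ∘ u) atTop (𝓝 (minMod f ℓ)) :=
    (minMod_cont hd ℓ (hp00.le.trans hℓp)).tendsto.comp htendw
  have hshift : Tendsto (fun n => u (n+1)) atTop (𝓝 ℓ) :=
    htend.comp (tendsto_add_atTop_nat 1)
  have heq : (minMod f ∘ u) = fun n => u (n+1) := by
    funext n; rw [husucc]; rfl
  rw [heq] at hcw
  have : minMod f ℓ = ℓ := tendsto_nhds_unique hcw hshift
  rw [this] at hkey
  exact absurd hkey (lt_irrefl _)

end HardB
section Final
variable {f : ℂ → ℂ}

lemma easy_dir (hd : Differentiable ℂ f) {r : ℝ} (hr : 0 < r)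
    (htend : Tendsto (fun n => (minMod f)^[n] r) atTop atTop) :
    ∃ R > (0:ℝ), ∀ t ≥ R, mtil f t > t := by
  refine ⟨r, hr, ?_⟩
  intro t ht
  by_contra hcon
  push_neg at hcon
  have htrap : ∀ s, 0 ≤ s → s ≤ t → minMod f s ≤ t :=
    fun s h1 h2 => (minMod_le_mtil hd h1 h2).trans hcon
  have hmem : ∀ n, (minMod f)^[n] r ∈ Set.Icc (0:ℝ) t := by
    intro n
    induction n with
    | zero => exact ⟨hr.le, ht⟩
    | succ k ih =>
      rw [Function.iterate_succ_apply']
      exact ⟨minMod_nonneg _, htrap _ ih.1 ih.2⟩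
  obtain ⟨n, hn⟩ := (htend.eventually_gt_atTop t).exists
  exact absurd ((hmem n).2.trans_lt hn) (lt_irrefl _)

end Final

theorem stmt0 (f : ℂ → ℂ) (hf : EntireTrans f) :
    (∃ r > (0 : ℝ), Tendsto (fun n => (minMod f)^[n] r) atTop atTop) ↔
      (∃ R > (0 : ℝ), ∀ r ≥ R, mtil f r > r) := by
  obtain ⟨hd, -⟩ := hf
  constructor
  · rintro ⟨r, hr, htend⟩
    exact easy_dir hd hr htend
  · rintro ⟨R, hR, hc⟩
    by_cases hzero : ∀ C : ℝ, ∃ z : ℂ, f z = 0 ∧ C < ‖z‖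
    · exact caseA hd hR hc hzero
    · push_neg at hzero
      obtain ⟨C, hC⟩ := hzero
      refine caseB hd hR hc (W := max C 0) (le_max_right _ _) ?_
      intro z hz
      exact (hC z hz).trans (le_max_left _ _)
end

section
/- Let ε : (0,∞) → (0,1/2) be decreasing with ε(r) → 0 and suppose k(r) = ε(r) log r is increasing. Let n : (0,∞) → ℝ satisfy n(t) ∼ t^{1/2−ε(t)} as t → ∞ and n(t) ≥ 0. Then N(r) = ∫₀^r n(t)/t dt ≥ 2 r^{1/2−ε(r)} (1+o(1)) as r → ∞. -/
open Filter Real MeasureTheory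

set_option maxHeartbeats 1000000 in
theorem stmt9 (ε n : ℝ → ℝ)
    (hεrange : ∀ r > (0:ℝ), 0 < ε r ∧ ε r < 1 / 2)
    (hεdec : ∀ ⦃r s : ℝ⦄, 0 < r → r ≤ s → ε s ≤ ε r)
    (hεlim : Tendsto ε atTop (nhds 0))
    (hkinc : ∀ ⦃r s : ℝ⦄, 0 < r → r ≤ s → ε r * Real.log r ≤ ε s * Real.log s)
    (hnpos : ∀ t > (0:ℝ), 0 ≤ n t)
    (hnmeas : Measurable n)
    (hnint : ∀ r > (0:ℝ), IntegrableOn (fun t => n t / t) (Set.Ioc 0 r))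
    (hnasymp : Tendsto (fun t => n t / t ^ ((1:ℝ)/2 - ε t)) atTop (nhds 1)) :
    ∃ g : ℝ → ℝ, Tendsto g atTop (nhds 0) ∧
      ∀ᶠ r in atTop,
        (∫ t in Set.Ioc (0:ℝ) r, n t / t) ≥ 2 * r ^ ((1:ℝ)/2 - ε r) * (1 + g r) := by
  classical
  have key : ∀ δ : ℝ, 0 < δ → δ < 1 →
      ∀ᶠ r in atTop, (∫ t in Set.Ioc (0:ℝ) r, n t / t)
        ≥ 2 * r ^ ((1:ℝ)/2 - ε r) * (1 - δ) := by
    intro δ hδ0 hδ1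
    -- get T from hnasymp
    have h1 : ∀ᶠ t in atTop, 1 - δ/2 ≤ n t / t ^ ((1:ℝ)/2 - ε t) :=
      hnasymp.eventually (eventually_ge_nhds (by linarith))
    obtain ⟨T0, hT0⟩ := eventually_atTop.mp h1
    set T : ℝ := max T0 1 with hTdef
    have hT1 : (1:ℝ) ≤ T := le_max_right _ _
    have hTpos : (0:ℝ) < T := lt_of_lt_of_le one_pos hT1
    have hTn : ∀ t, T ≤ t → 1 - δ/2 ≤ n t / t ^ ((1:ℝ)/2 - ε t) :=
      fun t ht => hT0 t (le_trans (le_max_left _ _) ht)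
    -- get threshold for ε small
    have h2 : ∀ᶠ r in atTop, ε r ≤ 1/4 :=
      hεlim.eventually (eventually_le_nhds (by norm_num))
    obtain ⟨R1, hR1⟩ := eventually_atTop.mp h2
    set C : ℝ := 2 * T ^ ((1:ℝ)/2) / δ with hCdef
    have hC0 : 0 ≤ C := by
      apply div_nonneg _ hδ0.le
      positivity
    filter_upwards [eventually_ge_atTop T, eventually_ge_atTop R1,
      eventually_ge_atTop (C ^ (4:ℝ)), eventually_ge_atTop 1] with r hrT hrR hrC hr1
    have hr0 : (0:ℝ) < r := lt_of_lt_of_le one_pos hr1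
    -- abbreviations
    set A : ℝ := r ^ ((1:ℝ)/2 - ε r) with hA
    set B : ℝ := r ^ (-(ε r)) with hB
    set s : ℝ := r ^ ((1:ℝ)/2) with hs
    set u : ℝ := T ^ ((1:ℝ)/2) with hu
    have hB0 : 0 < B := rpow_pos_of_pos hr0 _
    have hA0 : 0 < A := rpow_pos_of_pos hr0 _
    have hu0 : 0 ≤ u := rpow_nonneg hTpos.le _
    have hsB : s * B = A := by
      rw [hs, hB, hA, ← rpow_add hr0]
      ring_nf
    have hB1 : B ≤ 1 := by
      rw [hB]
      apply rpow_le_one_of_one_le_of_nonpos hr1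
      simp only [neg_nonpos]
      exact (hεrange r hr0).1.le
    -- A ≥ 2u/δ
    have hAC : C ≤ A := by
      have h14 : r ^ ((1:ℝ)/4) ≤ A := by
        rw [hA]
        apply rpow_le_rpow_of_exponent_le hr1
        linarith [hR1 r hrR]
      have hCC : (C ^ (4:ℝ)) ^ ((1:ℝ)/4) = C := by
        rw [← rpow_mul hC0]
        norm_num
      calc C = (C ^ (4:ℝ)) ^ ((1:ℝ)/4) := hCC.symm
        _ ≤ r ^ ((1:ℝ)/4) := rpow_le_rpow (by positivity) hrC (by norm_num)
        _ ≤ A := h14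
    have hδA : 2 * u ≤ δ * A := by
      have := (div_le_iff₀ hδ0).mp hAC
      rw [hCdef] at hAC
      have : 2 * u / δ ≤ A := hAC
      calc 2 * u = (2 * u / δ) * δ := by field_simp
        _ ≤ A * δ := mul_le_mul_of_nonneg_right this hδ0.le
        _ = δ * A := mul_comm _ _
    -- step A : restrict integral to Ioc T r
    have stepA : (∫ t in Set.Ioc T r, n t / t) ≤ ∫ t in Set.Ioc (0:ℝ) r, n t / t := by
      apply setIntegral_mono_set (hnint r hr0)
      · exact (ae_restrict_iff' measurableSet_Ioc).2
          (ae_of_all _ fun t ht => div_nonneg (hnpos t ht.1) ht.1.le)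
      · exact HasSubset.Subset.eventuallyLE (Set.Ioc_subset_Ioc_left hTpos.le)
    -- step B : pointwise lower bound
    have hsub : Set.Ioc T r ⊆ Set.Ioc (0:ℝ) r := Set.Ioc_subset_Ioc_left hTpos.le
    have hint2 : IntegrableOn (fun t => (1 - δ/2) * B * t ^ (-(1:ℝ)/2)) (Set.Ioc T r) := by
      have h := (intervalIntegral.intervalIntegrable_rpow'
        (show (-1:ℝ) < -(1:ℝ)/2 by norm_num) (a := T) (b := r)).const_mul ((1 - δ/2) * B)
      rw [intervalIntegrable_iff, Set.uIoc_of_le hrT] at h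
      exact h
    have stepB : (∫ t in Set.Ioc T r, (1 - δ/2) * B * t ^ (-(1:ℝ)/2))
        ≤ ∫ t in Set.Ioc T r, n t / t := by
      apply setIntegral_mono_on hint2 ((hnint r hr0).mono_set hsub) measurableSet_Ioc
      intro t ht
      have ht0 : 0 < t := lt_of_lt_of_le hTpos ht.1.le
      have htr : t ≤ r := ht.2
      have hnt : (1 - δ/2) * t ^ ((1:ℝ)/2 - ε t) ≤ n t := by
        have hp : 0 < t ^ ((1:ℝ)/2 - ε t) := rpow_pos_of_pos ht0 _
        have := hTn t ht.1.le
        calc (1 - δ/2) * t ^ ((1:ℝ)/2 - ε t)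
            ≤ (n t / t ^ ((1:ℝ)/2 - ε t)) * t ^ ((1:ℝ)/2 - ε t) :=
              mul_le_mul_of_nonneg_right this hp.le
          _ = n t := div_mul_cancel₀ _ hp.ne'
      have hexp : B ≤ t ^ (-(ε t)) := by
        rw [hB, rpow_def_of_pos hr0, rpow_def_of_pos ht0]
        apply Real.exp_le_exp.2
        have := hkinc ht0 htr
        nlinarith
      have hsplit : t ^ ((1:ℝ)/2 - ε t) / t = t ^ (-(1:ℝ)/2) * t ^ (-(ε t)) := by
        have h2 : t ^ ((1:ℝ)/2 - ε t - 1) = t ^ ((1:ℝ)/2 - ε t) / t := by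
          rw [rpow_sub ht0, rpow_one]
        rw [← h2, ← rpow_add ht0]
        congr 1
        ring
      calc (1 - δ/2) * B * t ^ (-(1:ℝ)/2)
          ≤ (1 - δ/2) * (t ^ (-(1:ℝ)/2) * t ^ (-(ε t))) := by
            rw [mul_assoc]
            apply mul_le_mul_of_nonneg_left _ (by linarith)
            rw [mul_comm B]
            exact mul_le_mul_of_nonneg_left hexp (rpow_nonneg ht0.le _)
        _ = (1 - δ/2) * (t ^ ((1:ℝ)/2 - ε t) / t) := by rw [hsplit]
        _ = ((1 - δ/2) * t ^ ((1:ℝ)/2 - ε t)) / t := by ring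
        _ ≤ n t / t := by gcongr
    -- step C : compute the integral
    have stepC : (∫ t in Set.Ioc T r, (1 - δ/2) * B * t ^ (-(1:ℝ)/2))
        = (1 - δ/2) * B * ((s - u) / (1/2)) := by
      rw [← intervalIntegral.integral_of_le hrT, intervalIntegral.integral_const_mul,
        integral_rpow (Or.inl (by norm_num))]
      norm_num [hs, hu]
    -- put together
    have hfinal : 2 * A * (1 - δ) ≤ (1 - δ/2) * B * ((s - u) / (1/2)) := by
      have hBu : (1 - δ/2) * B * u ≤ u := by
        have h1 : (1 - δ/2) * B ≤ 1 := by nlinarith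
        nlinarith [mul_le_mul_of_nonneg_right h1 hu0]
      nlinarith [hsB, hδA, mul_pos hB0 hA0]
    calc 2 * A * (1 - δ) ≤ (1 - δ/2) * B * ((s - u) / (1/2)) := hfinal
      _ = ∫ t in Set.Ioc T r, (1 - δ/2) * B * t ^ (-(1:ℝ)/2) := stepC.symm
      _ ≤ ∫ t in Set.Ioc T r, n t / t := stepB
      _ ≤ ∫ t in Set.Ioc (0:ℝ) r, n t / t := stepA
  -- define g
  refine ⟨fun r => min ((∫ t in Set.Ioc (0:ℝ) r, n t / t) / (2 * r ^ ((1:ℝ)/2 - ε r)) - 1) 0,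
    ?_, ?_⟩
  · rw [Metric.tendsto_nhds]
    intro η hη
    set δ : ℝ := min η 1 / 2 with hδdef
    have hδ0 : 0 < δ := by positivity
    have hδ1 : δ < 1 := by
      have h3 : min η 1 ≤ 1 := min_le_right _ _
      rw [hδdef]; linarith
    have hδη : δ < η := by
      have h2 : min η 1 ≤ η := min_le_left _ _
      have h1 : 0 < min η 1 := lt_min hη one_pos
      rw [hδdef]; linarith
    filter_upwards [key δ hδ0 hδ1, eventually_gt_atTop 0] with r hkey hr0
    have hD0 : 0 < 2 * r ^ ((1:ℝ)/2 - ε r) := by positivity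
    have hratio : 1 - δ ≤ (∫ t in Set.Ioc (0:ℝ) r, n t / t) / (2 * r ^ ((1:ℝ)/2 - ε r)) := by
      rw [le_div_iff₀ hD0]
      nlinarith [hkey]
    simp only [Real.dist_eq, sub_zero]
    rw [abs_lt]
    have hlo : -δ ≤ min ((∫ t in Set.Ioc (0:ℝ) r, n t / t) / (2 * r ^ ((1:ℝ)/2 - ε r)) - 1) 0 :=
      le_min (by linarith) (by linarith)
    have hhi : min ((∫ t in Set.Ioc (0:ℝ) r, n t / t) / (2 * r ^ ((1:ℝ)/2 - ε r)) - 1) 0 ≤ 0 :=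
      min_le_right _ _
    exact ⟨by linarith, by linarith⟩
  · filter_upwards [eventually_gt_atTop 0] with r hr0
    set N := ∫ t in Set.Ioc (0:ℝ) r, n t / t
    have hD0 : 0 < 2 * r ^ ((1:ℝ)/2 - ε r) := by positivity
    have h : 1 + min (N / (2 * r ^ ((1:ℝ)/2 - ε r)) - 1) 0 ≤ N / (2 * r ^ ((1:ℝ)/2 - ε r)) := by
      have := min_le_left (N / (2 * r ^ ((1:ℝ)/2 - ε r)) - 1) 0
      linarith
    calc 2 * r ^ ((1:ℝ)/2 - ε r) * (1 + min (N / (2 * r ^ ((1:ℝ)/2 - ε r)) - 1) 0)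
        ≤ 2 * r ^ ((1:ℝ)/2 - ε r) * (N / (2 * r ^ ((1:ℝ)/2 - ε r))) :=
          mul_le_mul_of_nonneg_left h hD0.le
      _ = N := mul_div_cancel₀ _ hD0.ne'
end

section
/- Suppose a_n, b_n > 1 satisfy a_{n+1} ≥ b_n^{10} and log b_{n+1} = (b_n/log b_n)·log a_{n+1} for all n ≥ 0, with b₀ > e. Then the set E* = ⋃_{n≥0}[a_n, b_n] has upper logarithmic density Λ̄(E*) = 1. -/
open Filter Real MeasureTheory

/-- Upper logarithmic density of a set `S ⊆ (0,∞)`. -/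
noncomputable def upperLogDens (S : Set ℝ) : ℝ :=
  limsup (fun r => (1 / Real.log r) * ∫ t in S ∩ Set.Ioo 1 r, 1 / t) atTop

lemma integrableOn_one_div_Ioo {a b : ℝ} (ha : 0 < a) :
    IntegrableOn (fun t : ℝ => 1 / t) (Set.Ioo a b) := by
  rcases le_or_gt b a with h | h
  · rw [Set.Ioo_eq_empty_of_le h]; simp [IntegrableOn]
  · have : IntervalIntegrable (fun t : ℝ => 1 / t) volume a b := by
      apply intervalIntegral.intervalIntegrable_one_div
      · intro x hx
        have : a ≤ x := by
          rcases hx with ⟨h1, h2⟩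
          simpa [min_eq_left h.le] using h1
        nlinarith
      · fun_prop
    have := this.1
    exact (this.mono_set Set.Ioo_subset_Ioc_self)

lemma integral_one_div_Ioo {a b : ℝ} (ha : 0 < a) (hab : a ≤ b) :
    ∫ t in Set.Ioo a b, 1 / t = Real.log b - Real.log a := by
  rw [← MeasureTheory.integral_Ioc_eq_integral_Ioo,
    ← intervalIntegral.integral_of_le hab]
  rw [integral_one_div]
  · have hb' : 0 < b := lt_of_lt_of_le ha hab
    rw [Real.log_div hb'.ne' ha.ne']
  · intro hx
    rcases hx with ⟨h1, _⟩
    have : a ≤ 0 := by simpa [min_eq_left hab] using h1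
    linarith

theorem stmt19 (a b : ℕ → ℝ)
    (ha1 : ∀ n, 1 < a n) (hb1 : ∀ n, 1 < b n)
    (hstep : ∀ n, a (n + 1) ≥ (b n) ^ (10 : ℕ))
    (hrec : ∀ n, Real.log (b (n + 1)) = (b n / Real.log (b n)) * Real.log (a (n + 1)))
    (hb0 : Real.exp 1 < b 0) :
    upperLogDens (⋃ n, Set.Icc (a n) (b n)) = 1 := by
  set S : Set ℝ := ⋃ n, Set.Icc (a n) (b n) with hS
  have hSmeas : MeasurableSet S := MeasurableSet.iUnion fun n => measurableSet_Icc
  set F : ℝ → ℝ := fun r => (1 / Real.log r) * ∫ t in S ∩ Set.Ioo 1 r, 1 / t with hF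
  have hlogb_pos : ∀ n, 0 < Real.log (b n) := fun n => Real.log_pos (hb1 n)
  have hloga_pos : ∀ n, 0 < Real.log (a n) := fun n => Real.log_pos (ha1 n)
  have hb_pos : ∀ n, 0 < b n := fun n => lt_trans one_pos (hb1 n)
  -- integrability on S ∩ Ioo 1 r
  have hInt : ∀ r : ℝ, IntegrableOn (fun t : ℝ => 1 / t) (S ∩ Set.Ioo 1 r) :=
    fun r => ((integrableOn_one_div_Ioo one_pos).mono_set Set.inter_subset_right)
  -- nonnegativity of integrand on Ioo 1 r
  have hnn : ∀ r : ℝ, 0 ≤ᵐ[volume.restrict (Set.Ioo 1 r)] fun t : ℝ => 1 / t := by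
    intro r
    filter_upwards [ae_restrict_mem measurableSet_Ioo] with t ht
    have := ht.1
    positivity
  -- upper bound : F r ≤ 1 for r > 1
  have hub : ∀ r : ℝ, 1 < r → F r ≤ 1 := by
    intro r hr
    have hlr : 0 < Real.log r := Real.log_pos hr
    have h1 : (∫ t in S ∩ Set.Ioo 1 r, 1 / t) ≤ ∫ t in Set.Ioo 1 r, 1 / t := by
      apply setIntegral_mono_set (integrableOn_one_div_Ioo one_pos) (hnn r)
      exact HasSubset.Subset.eventuallyLE Set.inter_subset_right
    have h2 : (∫ t in Set.Ioo (1:ℝ) r, 1 / t) = Real.log r := by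
      rw [integral_one_div_Ioo one_pos hr.le]; simp
    have key : F r = (∫ t in S ∩ Set.Ioo 1 r, 1 / t) / Real.log r := by
      show (1 / Real.log r) * (∫ t in S ∩ Set.Ioo 1 r, 1 / t) = _
      ring
    rw [key, div_le_one hlr]
    rw [h2] at h1; exact h1
  -- lower bound: F r ≥ 0 for r > 1
  have hlb0 : ∀ r : ℝ, 1 < r → 0 ≤ F r := by
    intro r hr
    have hlr : 0 < Real.log r := Real.log_pos hr
    have : 0 ≤ ∫ t in S ∩ Set.Ioo 1 r, 1 / t := by
      apply setIntegral_nonneg (hSmeas.inter measurableSet_Ioo)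
      intro t ht
      have := ht.2.1
      positivity
    have key : F r = (1 / Real.log r) * ∫ t in S ∩ Set.Ioo 1 r, 1 / t := rfl
    rw [key]
    exact mul_nonneg (by positivity) this
  -- b grows : log b (n+1) ≥ 10 * b n
  have hgrow : ∀ n, 10 * b n ≤ Real.log (b (n + 1)) := by
    intro n
    have h10 : Real.log ((b n) ^ (10:ℕ)) ≤ Real.log (a (n + 1)) :=
      Real.log_le_log (pow_pos (hb_pos n) 10) (hstep n)
    rw [Real.log_pow] at h10
    push_cast at h10
    rw [hrec n, div_mul_eq_mul_div, le_div_iff₀ (hlogb_pos n)]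
    nlinarith [hb_pos n]
  -- b n ≥ 2^n
  have hb2 : ∀ n, (2:ℝ)^n ≤ b n := by
    intro n
    induction n with
    | zero => simpa using (hb1 0).le
    | succ n ih =>
      have h1 : 10 * b n ≤ Real.log (b (n+1)) := hgrow n
      have h2 : Real.log (b (n+1)) ≤ b (n+1) := (Real.log_le_sub_one_of_pos (hb_pos (n+1))).trans (by linarith [hb_pos (n+1)])
      have : 2 * b n ≤ b (n+1) := by nlinarith [hb_pos n]
      calc (2:ℝ)^(n+1) = 2 * 2^n := by ring
      _ ≤ 2 * b n := by linarith [ih]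
      _ ≤ b (n+1) := this
  have hbtop : Tendsto b atTop atTop := by
    apply tendsto_atTop_mono hb2
    exact tendsto_pow_atTop_atTop_of_one_lt (by norm_num)
  -- log b n / b n → 0
  have hlogdiv : Tendsto (fun n => Real.log (b n) / b n) atTop (nhds 0) := by
    have h0 : Tendsto (fun x : ℝ => Real.log x / x) atTop (nhds 0) := by
      have := Real.isLittleO_log_id_atTop.tendsto_div_nhds_zero
      simpa using this
    exact h0.comp hbtop
  -- ratio : log a (n+1) / log b (n+1) = log b n / b n
  have hratio : ∀ n, Real.log (a (n+1)) / Real.log (b (n+1)) = Real.log (b n) / b n := by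
    intro n
    have h1 := (hloga_pos (n+1)).ne'
    have h2 := (hlogb_pos n).ne'
    have h3 := (hb_pos n).ne'
    rw [hrec n]
    field_simp
  -- a (n+1) < b (n+1)
  have hab : ∀ n, a (n+1) ≤ b (n+1) := by
    intro n
    have h1 : 1 < b n / Real.log (b n) := by
      rw [lt_div_iff₀ (hlogb_pos n), one_mul]
      have := Real.log_lt_sub_one_of_pos (hb_pos n) (hb1 n).ne'
      linarith
    have : Real.log (a (n+1)) ≤ Real.log (b (n+1)) := by
      rw [hrec n]
      nlinarith [hloga_pos (n+1)]
    exact (Real.log_le_log_iff (lt_trans one_pos (ha1 (n+1))) (hb_pos (n+1))).mp this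
  -- lower bound at r = b (n+1)
  have hlow : ∀ n, 1 - Real.log (b n) / b n ≤ F (b (n+1)) := by
    intro n
    have hbr : 1 < b (n+1) := hb1 (n+1)
    have hlr : 0 < Real.log (b (n+1)) := hlogb_pos (n+1)
    have hsub : Set.Ioo (a (n+1)) (b (n+1)) ⊆ S ∩ Set.Ioo 1 (b (n+1)) := by
      intro t ht
      constructor
      · exact Set.mem_iUnion.mpr ⟨n+1, Set.mem_Icc.mpr ⟨ht.1.le, ht.2.le⟩⟩
      · exact ⟨lt_trans (ha1 (n+1)) ht.1, ht.2⟩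
    have h1 : (∫ t in Set.Ioo (a (n+1)) (b (n+1)), 1 / t) ≤ ∫ t in S ∩ Set.Ioo 1 (b (n+1)), 1 / t := by
      apply setIntegral_mono_set (hInt (b (n+1)))
      · filter_upwards [ae_restrict_mem (hSmeas.inter measurableSet_Ioo)] with t ht
        have := ht.2.1
        positivity
      · exact HasSubset.Subset.eventuallyLE hsub
    rw [integral_one_div_Ioo (by linarith [ha1 (n+1)]) (hab n)] at h1
    have : 1 - Real.log (b n) / b n =
        (1 / Real.log (b (n+1))) * (Real.log (b (n+1)) - Real.log (a (n+1))) := by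
      rw [one_div, mul_sub, inv_mul_cancel₀ hlr.ne', ← div_eq_inv_mul, ← hratio n]
    rw [this]
    have key : F (b (n+1)) = (1 / Real.log (b (n+1))) * ∫ t in S ∩ Set.Ioo 1 (b (n+1)), 1 / t := rfl
    rw [key]
    apply mul_le_mul_of_nonneg_left h1 (by positivity)
  -- the subsequence tends to 1
  have hsubseq : Tendsto (fun n => F (b (n+1))) atTop (nhds 1) := by
    have hlim : Tendsto (fun n => 1 - Real.log (b n) / b n) atTop (nhds 1) := by
      have := hlogdiv.const_sub 1
      simpa using this
    apply tendsto_of_tendsto_of_tendsto_of_le_of_le hlim tendsto_const_nhds hlow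
    intro n
    exact hub (b (n+1)) (hb1 (n+1))
  -- eventually F ≤ 1 and F ≥ 0
  have hev1 : ∀ᶠ r in (atTop : Filter ℝ), F r ≤ 1 := by
    filter_upwards [eventually_gt_atTop 1] with r hr using hub r hr
  have hbdd : IsBoundedUnder (· ≤ ·) (atTop : Filter ℝ) F :=
    isBoundedUnder_of_eventually_le hev1
  have hev0 : ∀ᶠ r in (atTop : Filter ℝ), (0:ℝ) ≤ F r := by
    filter_upwards [eventually_gt_atTop 1] with r hr using hlb0 r hr
  have hcob : IsCoboundedUnder (· ≤ ·) (atTop : Filter ℝ) F :=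
    IsCoboundedUnder.of_frequently_ge hev0.frequently
  have hupper : limsup F atTop ≤ 1 := limsup_le_of_le hcob hev1
  have hmapble : Tendsto (fun n => b (n+1)) atTop atTop :=
    hbtop.comp (tendsto_add_atTop_nat 1)
  have hlower : 1 ≤ limsup F atTop := by
    have h1 : limsup F (map (fun n => b (n+1)) atTop) = 1 := by
      have : limsup (F ∘ fun n => b (n+1)) atTop = limsup F (map (fun n => b (n+1)) atTop) := rfl
      rw [← this]
      exact hsubseq.limsup_eq
    have hcb : IsCoboundedUnder (· ≤ ·) (atTop : Filter ℕ) (F ∘ fun n => b (n+1)) :=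
      (hsubseq.isBoundedUnder_ge).isCoboundedUnder_le
    have hcbmap : IsCoboundedUnder (· ≤ ·) (map (fun n => b (n+1)) atTop) F := by
      rw [IsCoboundedUnder] at hcb ⊢
      rwa [Filter.map_map]
    rw [← h1]
    exact limsup_le_limsup_of_le hmapble hcbmap hbdd
  rw [upperLogDens]
  exact le_antisymm hupper hlower
end
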